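/- For every k ≥ 2, d_k := Σ_{p≥⌈k/2⌉} c_{2p} binom(2p,k)/(d+1)^{2p} ≥ 1/(10 (k+1)^{3/2} (d+1)^k), where c_{2p} = (2p−3)!!(d+1)/(2π(2p−2)!!(2p−1)). -/
import Mathlib


/-- `c_{2p} = (2p−3)!!·(d+1)/(2π·(2p−2)!!·(2p−1))`. -/
noncomputable def c2p (d p : ℕ) : ℝ :=
  (Nat.doubleFactorial (2 * p - 3) : ℝ) * ((d : ℝ) + 1) /
    (2 * Real.pi * (Nat.doubleFactorial (2 * p - 2) : ℝ) * (2 * (p : ℝ) - 1))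

lemma df_odd_succ (m : ℕ) :
    Nat.doubleFactorial (2 * (m + 1) - 1) = (2 * m + 1) * Nat.doubleFactorial (2 * m - 1) := by
  cases m with
  | zero => rfl
  | succ n =>
      have h1 : 2 * (n + 1 + 1) - 1 = 2 * n + 1 + 2 := by omega
      have h2 : 2 * (n + 1) - 1 = 2 * n + 1 := by omega
      have h3 : 2 * (n + 1) + 1 = 2 * n + 1 + 2 := by omega
      rw [h1, h2, h3, Nat.doubleFactorial_add_two]

lemma df_even_succ (m : ℕ) :
    Nat.doubleFactorial (2 * (m + 1)) = (2 * m + 2) * Nat.doubleFactorial (2 * m) := by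
  have h1 : 2 * (m + 1) = 2 * m + 2 := by omega
  rw [h1, Nat.doubleFactorial_add_two]

/-- (2m-1)!! √(2m+1) ≤ (2m)!! -/
lemma Qm_le (m : ℕ) :
    ((2 * m - 1).doubleFactorial : ℝ) * Real.sqrt (2 * (m : ℝ) + 1)
      ≤ ((2 * m).doubleFactorial : ℝ) := by
  induction m with
  | zero => simp
  | succ n ih =>
      rw [df_odd_succ, df_even_succ]
      push_cast
      set A : ℝ := ((2 * n - 1).doubleFactorial : ℝ) with hA
      set B : ℝ := ((2 * n).doubleFactorial : ℝ) with hB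
      have hApos : (0:ℝ) < A := by positivity
      have hsn : 0 ≤ Real.sqrt (2 * ((n:ℝ) + 1) + 1) := Real.sqrt_nonneg _
      have htn : 0 ≤ Real.sqrt (2 * (n:ℝ) + 1) := Real.sqrt_nonneg _
      have key : (2 * (n:ℝ) + 1) * Real.sqrt (2 * ((n:ℝ) + 1) + 1)
          ≤ (2 * (n:ℝ) + 2) * Real.sqrt (2 * (n:ℝ) + 1) := by
        have e1 : (2 * (n:ℝ) + 1) * Real.sqrt (2 * ((n:ℝ) + 1) + 1)
            = Real.sqrt ((2 * (n:ℝ) + 1) ^ 2 * (2 * ((n:ℝ) + 1) + 1)) := by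
          rw [Real.sqrt_mul (by positivity), Real.sqrt_sq (by positivity)]
        have e2 : (2 * (n:ℝ) + 2) * Real.sqrt (2 * (n:ℝ) + 1)
            = Real.sqrt ((2 * (n:ℝ) + 2) ^ 2 * (2 * (n:ℝ) + 1)) := by
          rw [Real.sqrt_mul (by positivity), Real.sqrt_sq (by positivity)]
        rw [e1, e2]
        apply Real.sqrt_le_sqrt
        nlinarith [sq_nonneg (n:ℝ)]
      calc (2 * (n:ℝ) + 1) * A * Real.sqrt (2 * ((n:ℝ) + 1) + 1)
          ≤ (2 * (n:ℝ) + 2) * Real.sqrt (2 * (n:ℝ) + 1) * A := by nlinarith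
        _ ≤ (2 * (n:ℝ) + 2) * B := by nlinarith

/-- (2m)!! ≤ 2√m (2m-1)!! for m ≥ 1 -/
lemma Qm_ge (m : ℕ) (hm : 1 ≤ m) :
    ((2 * m).doubleFactorial : ℝ) ≤ 2 * Real.sqrt m * ((2 * m - 1).doubleFactorial : ℝ) := by
  induction m, hm using Nat.le_induction with
  | base => norm_num
  | succ n hn ih =>
      rw [df_odd_succ, df_even_succ]
      push_cast
      set A : ℝ := ((2 * n - 1).doubleFactorial : ℝ) with hA
      set B : ℝ := ((2 * n).doubleFactorial : ℝ) with hB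
      have hApos : (0:ℝ) < A := by positivity
      have hsn : 0 ≤ Real.sqrt ((n:ℝ) + 1) := Real.sqrt_nonneg _
      have htn : 0 ≤ Real.sqrt (n:ℝ) := Real.sqrt_nonneg _
      have key : (2 * (n:ℝ) + 2) * Real.sqrt (n:ℝ)
          ≤ (2 * (n:ℝ) + 1) * Real.sqrt ((n:ℝ) + 1) := by
        have e1 : (2 * (n:ℝ) + 2) * Real.sqrt (n:ℝ)
            = Real.sqrt ((2 * (n:ℝ) + 2) ^ 2 * (n:ℝ)) := by
          rw [Real.sqrt_mul (by positivity), Real.sqrt_sq (by positivity)]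
        have e2 : (2 * (n:ℝ) + 1) * Real.sqrt ((n:ℝ) + 1)
            = Real.sqrt ((2 * (n:ℝ) + 1) ^ 2 * ((n:ℝ) + 1)) := by
          rw [Real.sqrt_mul (by positivity), Real.sqrt_sq (by positivity)]
        rw [e1, e2]
        apply Real.sqrt_le_sqrt
        nlinarith [sq_nonneg (n:ℝ)]
      calc (2 * (n:ℝ) + 2) * B ≤ (2 * (n:ℝ) + 2) * (2 * Real.sqrt (n:ℝ) * A) := by nlinarith
        _ ≤ 2 * Real.sqrt ((n:ℝ) + 1) * ((2 * (n:ℝ) + 1) * A) := by nlinarith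

lemma sqrt_two_ge : (1.4 : ℝ) ≤ Real.sqrt 2 := by
  have h := Real.sq_sqrt (by norm_num : (0:ℝ) ≤ 2)
  nlinarith [Real.sqrt_nonneg (2:ℝ)]

/-- Lower bound `c_{2p} ≥ (d+1)/(10 (2p)^{3/2})` for `p ≥ 1`. -/
lemma c2p_lower (d p : ℕ) (hp : 1 ≤ p) :
    ((d:ℝ) + 1) / (10 * (2 * (p:ℝ)) * Real.sqrt (2 * (p:ℝ))) ≤ c2p d p := by
  obtain ⟨m, rfl⟩ : ∃ m, p = m + 1 := ⟨p - 1, by omega⟩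
  have h3 : 2 * (m + 1) - 3 = 2 * m - 1 := by omega
  have h2 : 2 * (m + 1) - 2 = 2 * m := by omega
  unfold c2p
  rw [h3, h2]
  push_cast
  set A : ℝ := ((2 * m - 1).doubleFactorial : ℝ) with hA
  set B : ℝ := ((2 * m).doubleFactorial : ℝ) with hB
  have hApos : (0:ℝ) < A := by positivity
  have hBpos : (0:ℝ) < B := by positivity
  have hpi : Real.pi < 3.15 := Real.pi_lt_d2
  have hpi0 : 0 < Real.pi := Real.pi_pos
  have hm0 : (0:ℝ) ≤ (m:ℝ) := by positivity
  have hd1 : (0:ℝ) < (d:ℝ) + 1 := by positivity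
  have hsq2 : (1.4:ℝ) ≤ Real.sqrt 2 := sqrt_two_ge
  have hden1 : (0:ℝ) < 10 * (2 * ((m:ℝ) + 1)) * Real.sqrt (2 * ((m:ℝ) + 1)) := by positivity
  have hden2 : (0:ℝ) < 2 * Real.pi * B * (2 * ((m:ℝ) + 1) - 1) := by
    have : (0:ℝ) < 2 * ((m:ℝ) + 1) - 1 := by nlinarith
    positivity
  rw [div_le_div_iff₀ hden1 hden2]
  have hs2 : Real.sqrt (2 * ((m:ℝ) + 1)) = Real.sqrt 2 * Real.sqrt ((m:ℝ) + 1) := by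
    rw [← Real.sqrt_mul (by norm_num)]
  have hSpos : (0:ℝ) ≤ Real.sqrt ((m:ℝ) + 1) := Real.sqrt_nonneg _
  suffices h : 2 * Real.pi * B * (2 * ((m:ℝ) + 1) - 1)
      ≤ A * (10 * (2 * ((m:ℝ) + 1)) * Real.sqrt (2 * ((m:ℝ) + 1))) by nlinarith
  rcases Nat.eq_zero_or_pos m with hm | hm
  · subst hm
    have hA1 : A = 1 := by simp [hA]
    have hB1 : B = 1 := by simp [hB]
    rw [hA1, hB1, hs2]
    have hS1 : Real.sqrt ((0:ℕ):ℝ) = 0 := by simp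
    have : Real.sqrt (((0:ℕ):ℝ) + 1) = 1 := by norm_num
    rw [this]
    push_cast
    nlinarith
  · have hQ : B ≤ 2 * Real.sqrt (m:ℝ) * A := Qm_ge m hm
    have hmono : Real.sqrt (m:ℝ) ≤ Real.sqrt ((m:ℝ) + 1) := Real.sqrt_le_sqrt (by linarith)
    have hB2 : B ≤ 2 * Real.sqrt ((m:ℝ) + 1) * A := by nlinarith
    have hstep : 2 * Real.pi * B * (2 * ((m:ℝ) + 1) - 1)
        ≤ 2 * Real.pi * (2 * Real.sqrt ((m:ℝ) + 1) * A) * (2 * ((m:ℝ) + 1) - 1) := by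
      have hfac : (0:ℝ) ≤ 2 * Real.pi * (2 * ((m:ℝ) + 1) - 1) := by nlinarith
      nlinarith
    have hco : 2 * Real.pi * 2 * (2 * ((m:ℝ) + 1) - 1) ≤ 20 * Real.sqrt 2 * ((m:ℝ) + 1) := by
      nlinarith [mul_nonneg (by linarith : (0:ℝ) ≤ 3.15 - Real.pi) hm0,
        mul_nonneg (by linarith : (0:ℝ) ≤ Real.sqrt 2 - 1.4) hm0]
    have hSA : (0:ℝ) ≤ Real.sqrt ((m:ℝ) + 1) * A := by positivity
    have hfin := mul_le_mul_of_nonneg_right hco hSA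
    rw [hs2]
    set S : ℝ := Real.sqrt ((m:ℝ) + 1) with hS
    calc 2 * Real.pi * B * (2 * ((m:ℝ) + 1) - 1)
        ≤ 2 * Real.pi * (2 * S * A) * (2 * ((m:ℝ) + 1) - 1) := hstep
      _ = (2 * Real.pi * 2 * (2 * ((m:ℝ) + 1) - 1)) * (S * A) := by ring
      _ ≤ (20 * Real.sqrt 2 * ((m:ℝ) + 1)) * (S * A) := hfin
      _ = A * (10 * (2 * ((m:ℝ) + 1)) * (Real.sqrt 2 * S)) := by ring

lemma c2p_nonneg (d p : ℕ) (hp : 1 ≤ p) : 0 ≤ c2p d p :=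
  le_trans (div_nonneg (by positivity) (by positivity)) (c2p_lower d p hp)

/-- Upper bound `c_{2p} ≤ (d+1)/(2π (2p-1)^{3/2})` for `p ≥ 1`. -/
lemma c2p_le (d p : ℕ) (hp : 1 ≤ p) :
    c2p d p ≤ ((d:ℝ) + 1) /
      (2 * Real.pi * (2 * (p:ℝ) - 1) * Real.sqrt (2 * (p:ℝ) - 1)) := by
  obtain ⟨m, rfl⟩ : ∃ m, p = m + 1 := ⟨p - 1, by omega⟩
  have h3 : 2 * (m + 1) - 3 = 2 * m - 1 := by omega
  have h2 : 2 * (m + 1) - 2 = 2 * m := by omega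
  unfold c2p
  rw [h3, h2]
  push_cast
  have he : 2 * ((m:ℝ) + 1) - 1 = 2 * (m:ℝ) + 1 := by ring
  rw [he]
  set A : ℝ := ((2 * m - 1).doubleFactorial : ℝ) with hA
  set B : ℝ := ((2 * m).doubleFactorial : ℝ) with hB
  have hApos : (0:ℝ) < A := by positivity
  have hBpos : (0:ℝ) < B := by positivity
  have hpi0 : 0 < Real.pi := Real.pi_pos
  have hQ : A * Real.sqrt (2 * (m:ℝ) + 1) ≤ B := Qm_le m
  have hden1 : (0:ℝ) < 2 * Real.pi * B * (2 * (m:ℝ) + 1) := by positivity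
  have hden2 : (0:ℝ) < 2 * Real.pi * (2 * (m:ℝ) + 1) * Real.sqrt (2 * (m:ℝ) + 1) := by
    have : (0:ℝ) < Real.sqrt (2 * (m:ℝ) + 1) := Real.sqrt_pos.mpr (by positivity)
    positivity
  rw [div_le_div_iff₀ hden1 hden2]
  have hfin := mul_le_mul_of_nonneg_left hQ
    (by positivity : (0:ℝ) ≤ ((d:ℝ) + 1) * (2 * Real.pi * (2 * (m:ℝ) + 1)))
  calc A * ((d:ℝ) + 1) * (2 * Real.pi * (2 * (m:ℝ) + 1) * Real.sqrt (2 * (m:ℝ) + 1))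
      = ((d:ℝ) + 1) * (2 * Real.pi * (2 * (m:ℝ) + 1)) * (A * Real.sqrt (2 * (m:ℝ) + 1)) := by
        ring
    _ ≤ ((d:ℝ) + 1) * (2 * Real.pi * (2 * (m:ℝ) + 1)) * B := hfin
    _ = ((d:ℝ) + 1) * (2 * Real.pi * B * (2 * (m:ℝ) + 1)) := by ring

lemma choose_le_two_pow (n k : ℕ) : n.choose k ≤ 2 ^ n := by
  rcases le_or_gt k n with h | h
  · calc n.choose k ≤ ∑ m ∈ Finset.range (n + 1), n.choose m :=
        Finset.single_le_sum (fun i _ => Nat.zero_le _) (Finset.mem_range.2 (by omega))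
      _ = 2 ^ n := Nat.sum_range_choose n
  · rw [Nat.choose_eq_zero_of_lt h]; positivity

lemma rpow_3half (x : ℝ) (hx : 0 ≤ x) : x ^ ((3:ℝ)/2) = x * Real.sqrt x := by
  rw [Real.sqrt_eq_rpow, show (3:ℝ)/2 = 1 + 1/2 by norm_num,
    Real.rpow_add' hx (by norm_num), Real.rpow_one]

lemma summable_aux : Summable (fun q : ℕ => 1 / (((q:ℝ) + 1) * Real.sqrt ((q:ℝ) + 1))) := by
  have h := (Real.summable_one_div_nat_rpow (p := 3/2)).mpr (by norm_num)
  have h2 := (summable_nat_add_iff 1).mpr h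
  refine h2.congr fun q => ?_
  rw [show (((q + 1 : ℕ)):ℝ) = (q:ℝ) + 1 by push_cast; ring, rpow_3half _ (by positivity)]

/-- Coefficients `d_k` of the NTK feature map: `d₀ = 1/4 + Σ_{p≥1} c_{2p}/(d+1)^{2p}`,
`d₁ = 1/4 + Σ_{p≥1} 2p·c_{2p}/(d+1)^{2p}`, and for `k ≥ 2`,
`d_k = Σ_{p≥⌈k/2⌉} c_{2p}·binom(2p,k)/(d+1)^{2p}` (here `⌈k/2⌉ = (k+1)/2` in `ℕ`). -/
noncomputable def dcoef (d : ℕ) : ℕ → ℝ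
  | 0 => 1 / 4 + ∑' q : ℕ, c2p d (q + 1) / ((d : ℝ) + 1) ^ (2 * (q + 1))
  | 1 => 1 / 4 + ∑' q : ℕ, (2 * ((q : ℝ) + 1)) * c2p d (q + 1) / ((d : ℝ) + 1) ^ (2 * (q + 1))
  | k => ∑' q : ℕ,
      c2p d ((k + 1) / 2 + q) * (Nat.choose (2 * ((k + 1) / 2 + q)) k : ℝ) /
        ((d : ℝ) + 1) ^ (2 * ((k + 1) / 2 + q))

/-- Lower bound on the feature coefficients: for `k ≥ 2`,
`d_k ≥ 1/(10 (k+1)^{3/2} (d+1)^k)`. -/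
theorem dcoef_lower_bound (d : ℕ) (hd : 1 ≤ d) (k : ℕ) (hk : 2 ≤ k) :
    1 / (10 * ((k : ℝ) + 1) ^ ((3 : ℝ) / 2) * ((d : ℝ) + 1) ^ k) ≤ dcoef d k := by
  have hdc : dcoef d k = ∑' q : ℕ,
      c2p d ((k + 1) / 2 + q) * (Nat.choose (2 * ((k + 1) / 2 + q)) k : ℝ) /
        ((d : ℝ) + 1) ^ (2 * ((k + 1) / 2 + q)) := by
    obtain ⟨n, rfl⟩ : ∃ n, k = n + 2 := ⟨k - 2, by omega⟩
    rfl
  rw [hdc]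
  set p0 := (k + 1) / 2 with hp0
  have hp01 : 1 ≤ p0 := by omega
  set f : ℕ → ℝ := fun q =>
    c2p d (p0 + q) * (Nat.choose (2 * (p0 + q)) k : ℝ) / ((d:ℝ) + 1) ^ (2 * (p0 + q)) with hf
  have hd2 : (2:ℝ) ≤ (d:ℝ) + 1 := by
    have : (1:ℝ) ≤ (d:ℝ) := by exact_mod_cast hd
    linarith
  have hd1 : (0:ℝ) < (d:ℝ) + 1 := by linarith
  have hnonneg : ∀ q, 0 ≤ f q := fun q =>
    div_nonneg (mul_nonneg (c2p_nonneg d (p0 + q) (by omega)) (by positivity)) (by positivity)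
  have hpi0 : 0 < Real.pi := Real.pi_pos
  -- summability
  have hbound : ∀ q : ℕ, f q ≤ ((d:ℝ) + 1) / (2 * Real.pi) *
      (1 / (((q:ℝ) + 1) * Real.sqrt ((q:ℝ) + 1))) := by
    intro q
    set P := p0 + q with hP
    have hP1 : 1 ≤ P := by omega
    have hPr : ((q:ℝ)) + 1 ≤ 2 * (P:ℝ) - 1 := by
      have : q + 1 ≤ P := by omega
      have := (Nat.cast_le (α := ℝ)).mpr this
      push_cast at this ⊢
      linarith
    have hq1 : (0:ℝ) < (q:ℝ) + 1 := by positivity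
    have hC : (Nat.choose (2 * P) k : ℝ) ≤ ((d:ℝ) + 1) ^ (2 * P) := by
      calc (Nat.choose (2 * P) k : ℝ) ≤ ((2:ℝ)) ^ (2 * P) := by
            exact_mod_cast Nat.cast_le.mpr (choose_le_two_pow (2 * P) k)
        _ ≤ ((d:ℝ) + 1) ^ (2 * P) := pow_le_pow_left₀ (by norm_num) hd2 _
    have h1 : f q ≤ c2p d P := by
      rw [hf]
      simp only
      rw [mul_div_assoc]
      calc c2p d P * ((Nat.choose (2 * P) k : ℝ) / ((d:ℝ) + 1) ^ (2 * P))
          ≤ c2p d P * 1 := by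
            apply mul_le_mul_of_nonneg_left _ (c2p_nonneg d P hP1)
            rw [div_le_one (by positivity)]
            exact hC
        _ = c2p d P := mul_one _
    have h2 : c2p d P ≤ ((d:ℝ) + 1) /
        (2 * Real.pi * (2 * (P:ℝ) - 1) * Real.sqrt (2 * (P:ℝ) - 1)) := c2p_le d P hP1
    have h3 : ((d:ℝ) + 1) / (2 * Real.pi * (2 * (P:ℝ) - 1) * Real.sqrt (2 * (P:ℝ) - 1))
        ≤ ((d:ℝ) + 1) / (2 * Real.pi * (((q:ℝ) + 1) * Real.sqrt ((q:ℝ) + 1))) := by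
      apply div_le_div_of_nonneg_left (by linarith) (by positivity)
      have hs : Real.sqrt ((q:ℝ) + 1) ≤ Real.sqrt (2 * (P:ℝ) - 1) := Real.sqrt_le_sqrt hPr
      have hs0 : 0 ≤ Real.sqrt ((q:ℝ) + 1) := Real.sqrt_nonneg _
      have := mul_le_mul hPr hs hs0 (by linarith)
      nlinarith
    have h4 : ((d:ℝ) + 1) / (2 * Real.pi * (((q:ℝ) + 1) * Real.sqrt ((q:ℝ) + 1)))
        = ((d:ℝ) + 1) / (2 * Real.pi) * (1 / (((q:ℝ) + 1) * Real.sqrt ((q:ℝ) + 1))) := by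
      field_simp
    linarith [h1, h2, h3, h4.le, h4.ge]
  have hsum : Summable f :=
    Summable.of_nonneg_of_le hnonneg hbound (summable_aux.mul_left _)
  have h0 : f 0 ≤ ∑' q, f q := Summable.le_tsum hsum 0 (fun j _ => hnonneg j)
  refine le_trans ?_ h0
  -- now bound f 0 from below
  have hX : (0:ℝ) < (k:ℝ) + 1 := by positivity
  have hrw : ((k:ℝ) + 1) ^ ((3:ℝ)/2) = ((k:ℝ) + 1) * Real.sqrt ((k:ℝ) + 1) :=
    rpow_3half _ (by positivity)
  have hsX : 0 < Real.sqrt ((k:ℝ) + 1) := Real.sqrt_pos.mpr hX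
  have hDpos : (0:ℝ) < ((d:ℝ) + 1) ^ k := by positivity
  rw [hrw]
  rcases Nat.even_or_odd k with hke | hko
  · -- even: 2 * p0 = k
    have h2p0 : 2 * p0 = k := by
      obtain ⟨t, ht⟩ := hke; omega
    have hchoose : Nat.choose (2 * (p0 + 0)) k = 1 := by
      rw [show p0 + 0 = p0 from rfl, h2p0, Nat.choose_self]
    have hf0 : f 0 = c2p d p0 / ((d:ℝ) + 1) ^ k := by
      rw [hf]; simp only [hchoose]
      rw [show p0 + 0 = p0 from rfl, h2p0]
      push_cast
      ring
    rw [hf0]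
    have hcast : 2 * (p0:ℝ) = (k:ℝ) := by exact_mod_cast h2p0
    have hc := c2p_lower d p0 hp01
    rw [hcast] at hc
    have hk0 : (0:ℝ) < (k:ℝ) := by
      have : (2:ℝ) ≤ (k:ℝ) := by exact_mod_cast hk
      linarith
    have hsk : 0 < Real.sqrt (k:ℝ) := Real.sqrt_pos.mpr hk0
    have hstep : 1 / (10 * (((k:ℝ) + 1) * Real.sqrt ((k:ℝ) + 1)))
        ≤ ((d:ℝ) + 1) / (10 * (k:ℝ) * Real.sqrt (k:ℝ)) := by
      apply div_le_div₀ (by linarith) (by linarith) (by positivity)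
      have hs : Real.sqrt (k:ℝ) ≤ Real.sqrt ((k:ℝ) + 1) := Real.sqrt_le_sqrt (by linarith)
      nlinarith
    calc 1 / (10 * (((k:ℝ) + 1) * Real.sqrt ((k:ℝ) + 1)) * ((d:ℝ) + 1) ^ k)
        = (1 / (10 * (((k:ℝ) + 1) * Real.sqrt ((k:ℝ) + 1)))) / ((d:ℝ) + 1) ^ k := by
          rw [div_div]
      _ ≤ (((d:ℝ) + 1) / (10 * (k:ℝ) * Real.sqrt (k:ℝ))) / ((d:ℝ) + 1) ^ k :=
          (div_le_div_iff_of_pos_right hDpos).mpr hstep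
      _ ≤ c2p d p0 / ((d:ℝ) + 1) ^ k := (div_le_div_iff_of_pos_right hDpos).mpr hc
  · -- odd: 2 * p0 = k + 1
    have h2p0 : 2 * p0 = k + 1 := by
      obtain ⟨t, ht⟩ := hko; omega
    have hchoose : Nat.choose (2 * (p0 + 0)) k = k + 1 := by
      rw [show p0 + 0 = p0 from rfl, h2p0, Nat.choose_succ_self_right]
    have hf0 : f 0 = c2p d p0 * ((k:ℝ) + 1) / (((d:ℝ) + 1) ^ k * ((d:ℝ) + 1)) := by
      rw [hf]; simp only [hchoose]
      rw [show p0 + 0 = p0 from rfl, h2p0, pow_succ]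
      push_cast
      ring
    rw [hf0]
    have hcast : 2 * (p0:ℝ) = (k:ℝ) + 1 := by exact_mod_cast h2p0
    have hc := c2p_lower d p0 hp01
    rw [hcast] at hc
    rw [div_le_div_iff₀ (by positivity) (by positivity)]
    have hc' := (div_le_iff₀ (by positivity)).mp hc
    -- hc' : (d+1) ≤ c2p d p0 * (10 * (k+1) * √(k+1))
    have hkr : (0:ℝ) ≤ (k:ℝ) := by positivity
    nlinarith [mul_le_mul_of_nonneg_right hc'
        (by positivity : (0:ℝ) ≤ ((k:ℝ) + 1) * ((d:ℝ) + 1) ^ k),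
      mul_nonneg (mul_nonneg hd1.le hDpos.le) hkr]
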